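/- Let π and π̃ be probability measures on ℝ^d and P a proposal transition kernel on ℝ^d such that the Metropolis–Hastings acceptance probabilities α(x, y) := min{1, (dν^⊤/dν)(x, y)} and α̃(x, y) := min{1, (dν̃^⊤/dν̃)(x, y)} are well-defined, where ν(dx dy) := P(x, dy) π(dx), ν̃(dx dy) := P(x, dy) π̃(dx), and ν^⊤, ν̃^⊤ denote the swapped measures. Let K and K̃ be the corresponding MH transition kernels targeting π and π̃ with the same proposal P. Then the average acceptance rates satisfy |ᾱ(K) − ᾱ(K̃)| ≤ 2 d_TV(π, π̃). -/

import Mathlib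

open MeasureTheory ProbabilityTheory
open scoped ENNReal NNReal

/-- The total variation distance `d_TV(μ, ν) = ½ ∫ |dμ/dη − dν/dη| dη` computed w.r.t. the
dominating measure `η = μ + ν`. -/
noncomputable def tvDist {α : Type*} [MeasurableSpace α] (μ ν : Measure α) : ℝ :=
  (1 / 2) * ∫ x, |(μ.rnDeriv (μ + ν) x).toReal - (ν.rnDeriv (μ + ν) x).toReal| ∂(μ + ν)

/-- The Metropolis–Hastings acceptance probability `α_P(x, y) := min{1, dν^⊤/dν (x, y)}`,
where `ν(dx dy) := P(x, dy) π(dx)` and `ν^⊤` is its swap. -/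
noncomputable def mhAccept {E : Type*} [MeasurableSpace E] (π : Measure E) (P : Kernel E E) :
    E × E → ℝ≥0∞ :=
  fun p => min 1 (((π ⊗ₘ P).map Prod.swap).rnDeriv (π ⊗ₘ P) p)

/-!
With `ν = π ⊗ P`, the average acceptance rate `∫ min(1, dν^⊤/dν) dν` is the total mass of the
overlap `ν ∧ ν^⊤`, i.e. `∫ min(a, b) dσ` for the densities `a, b` of `ν, ν^⊤` with respect to any
common dominating measure `σ`. Since `min(a, b) ≤ min(c, d) + (a - c)⁺ + (b - d)⁺`, the overlap is
`1`-Lipschitz: `ᾱ(K) ≤ ᾱ(K̃) + (ν - ν̃)(E × E) + (ν^⊤ - ν̃^⊤)(E × E)`. Both error terms equal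
`(π - π̃)(E)`, because swapping is a bijection and `P` is Markov, and for probability measures
`(π - π̃)(E) = d_TV(π, π̃)`. Exchanging the roles of `π` and `π̃` gives the bound.
-/

lemma ENNReal.abs_toReal_sub_toReal {x y : ℝ≥0∞} (hx : x ≠ ∞) (hy : y ≠ ∞) :
    |x.toReal - y.toReal| = ((x - y) + (y - x)).toReal := by
  rcases le_total x y with h | h
  · rw [tsub_eq_zero_of_le h, zero_add, ENNReal.toReal_sub_of_le h hy, abs_sub_comm,
      abs_of_nonneg (sub_nonneg.mpr (ENNReal.toReal_mono hy h))]
  · rw [tsub_eq_zero_of_le h, add_zero, ENNReal.toReal_sub_of_le h hx,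
      abs_of_nonneg (sub_nonneg.mpr (ENNReal.toReal_mono hx h))]

lemma ENNReal.abs_toReal_sub_le {a b c : ℝ≥0∞} (ha : a ≠ ∞) (hb : b ≠ ∞) (hc : c ≠ ∞)
    (hab : a ≤ b + c) (hba : b ≤ a + c) : |a.toReal - b.toReal| ≤ c.toReal := by
  have h₁ := ENNReal.toReal_mono (ENNReal.add_ne_top.mpr ⟨hb, hc⟩) hab
  have h₂ := ENNReal.toReal_mono (ENNReal.add_ne_top.mpr ⟨ha, hc⟩) hba
  rw [ENNReal.toReal_add hb hc] at h₁
  rw [ENNReal.toReal_add ha hc] at h₂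
  exact abs_sub_le_iff.mpr ⟨by linarith, by linarith⟩

lemma ENNReal.min_le_min_add_tsub_add_tsub (a b c d : ℝ≥0∞) :
    min a b ≤ min c d + (a - c) + (b - d) := by
  calc min a b ≤ min (c + ((a - c) + (b - d))) (d + ((a - c) + (b - d))) :=
        min_le_min (le_add_tsub.trans (add_le_add_right le_self_add _))
          (le_add_tsub.trans (add_le_add_right le_add_self _))
    _ = min c d + (a - c) + (b - d) := by rw [min_add_add_right, add_assoc]

namespace MeasureTheory.Measure

variable {α β : Type*} {mα : MeasurableSpace α} {mβ : MeasurableSpace β}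

lemma sub_eq_withDensity_rnDeriv_tsub {μ ν σ : Measure α} [SigmaFinite μ]
    [IsFiniteMeasure ν] [SigmaFinite σ] (hμ : μ ≪ σ) (hν : ν ≪ σ) :
    μ - ν = σ.withDensity (μ.rnDeriv σ - ν.rnDeriv σ) := by
  rw [withDensity_sub (measurable_rnDeriv _ _) (measurable_rnDeriv _ _),
    withDensity_rnDeriv_eq _ _ hμ, withDensity_rnDeriv_eq _ _ hν]

lemma sub_apply_univ_eq_lintegral_rnDeriv_tsub {μ ν σ : Measure α} [SigmaFinite μ]
    [IsFiniteMeasure ν] [SigmaFinite σ] (hμ : μ ≪ σ) (hν : ν ≪ σ) :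
    (μ - ν) Set.univ = ∫⁻ x, μ.rnDeriv σ x - ν.rnDeriv σ x ∂σ := by
  rw [sub_eq_withDensity_rnDeriv_tsub hμ hν, withDensity_apply _ MeasurableSet.univ,
    restrict_univ]
  rfl

lemma sub_apply_univ_eq_sub_lintegral_min {μ ν σ : Measure α} [IsFiniteMeasure μ]
    [IsFiniteMeasure ν] [SigmaFinite σ] (hμ : μ ≪ σ) (hν : ν ≪ σ) :
    (μ - ν) Set.univ = μ Set.univ - ∫⁻ x, min (μ.rnDeriv σ x) (ν.rnDeriv σ x) ∂σ := by
  have hmin : ∫⁻ x, min (μ.rnDeriv σ x) (ν.rnDeriv σ x) ∂σ ≠ ∞ :=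
    ne_top_of_le_ne_top (lintegral_rnDeriv_lt_top μ σ).ne
      (lintegral_mono fun _ => min_le_left _ _)
  rw [sub_apply_univ_eq_lintegral_rnDeriv_tsub hμ hν, ← lintegral_rnDeriv hμ,
    ← lintegral_sub ((measurable_rnDeriv _ _).min (measurable_rnDeriv _ _)) hmin
      (ae_of_all _ fun _ => min_le_left _ _)]
  simp only [tsub_min]

lemma sub_apply_univ_comm {μ ν : Measure α} [IsFiniteMeasure μ] [IsFiniteMeasure ν]
    (h : μ Set.univ = ν Set.univ) : (μ - ν) Set.univ = (ν - μ) Set.univ := by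
  have hμ : μ ≪ μ + ν := absolutelyContinuous_of_le (Measure.le_add_right le_rfl)
  have hν : ν ≪ μ + ν := absolutelyContinuous_of_le (Measure.le_add_left le_rfl)
  rw [sub_apply_univ_eq_sub_lintegral_min hμ hν, sub_apply_univ_eq_sub_lintegral_min hν hμ, h]
  simp_rw [min_comm]

lemma map_sub_le_map_sub (e : α ≃ᵐ β) (μ ν : Measure α) [IsFiniteMeasure μ]
    [IsFiniteMeasure ν] : μ.map e - ν.map e ≤ (μ - ν).map e := by
  refine sub_le_of_le_add ?_
  rw [← Measure.map_add _ _ e.measurable]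
  exact map_mono (sub_le_iff_le_add.mp le_rfl) e.measurable

lemma map_sub (e : α ≃ᵐ β) (μ ν : Measure α) [IsFiniteMeasure μ] [IsFiniteMeasure ν] :
    (μ - ν).map e = μ.map e - ν.map e := by
  refine le_antisymm ?_ (map_sub_le_map_sub e μ ν)
  have h := map_mono (map_sub_le_map_sub e.symm (μ.map e) (ν.map e)) e.measurable
  simpa [map_map e.symm.measurable e.measurable] using h

lemma compProd_sub_apply_univ (μ ν : Measure α) [IsFiniteMeasure μ] [IsFiniteMeasure ν]
    (κ : Kernel α β) [IsMarkovKernel κ] :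
    (μ ⊗ₘ κ - ν ⊗ₘ κ) Set.univ = (μ - ν) Set.univ := by
  have hμ : μ ≪ μ + ν := absolutelyContinuous_of_le (Measure.le_add_right le_rfl)
  have hν : ν ≪ μ + ν := absolutelyContinuous_of_le (Measure.le_add_left le_rfl)
  have hdiff : Measurable fun x => μ.rnDeriv (μ + ν) x - ν.rnDeriv (μ + ν) x := by fun_prop
  rw [sub_apply_univ_eq_lintegral_rnDeriv_tsub (hμ.compProd_left κ) (hν.compProd_left κ),
    sub_apply_univ_eq_lintegral_rnDeriv_tsub hμ hν]
  calc _ = ∫⁻ p, μ.rnDeriv (μ + ν) p.1 - ν.rnDeriv (μ + ν) p.1 ∂(μ + ν) ⊗ₘ κ := by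
        refine lintegral_congr_ae ?_
        filter_upwards [rnDeriv_measure_compProd_left μ (μ + ν) κ,
          rnDeriv_measure_compProd_left ν (μ + ν) κ] with p hpμ hpν
        rw [hpμ, hpν]
    _ = _ := by rw [← lintegral_map hdiff measurable_fst, ← Measure.fst, fst_compProd]

lemma lintegral_min_one_rnDeriv {ρ ρ' σ : Measure α} [SigmaFinite ρ] [SigmaFinite ρ']
    [SigmaFinite σ] (hρ' : ρ' ≪ ρ) (hρ : ρ ≪ σ) :
    ∫⁻ x, min 1 (ρ'.rnDeriv ρ x) ∂ρ = ∫⁻ x, min (ρ.rnDeriv σ x) (ρ'.rnDeriv σ x) ∂σ := by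
  rw [← lintegral_rnDeriv_mul hρ (by fun_prop)]
  refine lintegral_congr_ae ?_
  filter_upwards [rnDeriv_mul_rnDeriv (κ := σ) hρ'] with x hx
  rw [← hx, Pi.mul_apply, mul_comm (ρ'.rnDeriv ρ x), mul_min, mul_one]

lemma lintegral_min_one_rnDeriv_le {ρ₁ ρ₂ η₁ η₂ : Measure α} [IsFiniteMeasure ρ₁]
    [IsFiniteMeasure ρ₂] [IsFiniteMeasure η₁] [IsFiniteMeasure η₂] (hρ : ρ₂ ≪ ρ₁)
    (hη : η₂ ≪ η₁) :
    ∫⁻ x, min 1 (ρ₂.rnDeriv ρ₁ x) ∂ρ₁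
      ≤ ∫⁻ x, min 1 (η₂.rnDeriv η₁ x) ∂η₁ + (ρ₁ - η₁) Set.univ + (ρ₂ - η₂) Set.univ := by
  set σ := ρ₁ + η₁
  have hρ₁ : ρ₁ ≪ σ := absolutelyContinuous_of_le (Measure.le_add_right le_rfl)
  have hη₁ : η₁ ≪ σ := absolutelyContinuous_of_le (Measure.le_add_left le_rfl)
  rw [lintegral_min_one_rnDeriv hρ hρ₁, lintegral_min_one_rnDeriv hη hη₁,
    sub_apply_univ_eq_lintegral_rnDeriv_tsub hρ₁ hη₁,
    sub_apply_univ_eq_lintegral_rnDeriv_tsub (hρ.trans hρ₁) (hη.trans hη₁),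
    ← lintegral_add_left (by fun_prop), ← lintegral_add_left (by fun_prop)]
  exact lintegral_mono fun x => ENNReal.min_le_min_add_tsub_add_tsub _ _ _ _

end MeasureTheory.Measure

section TotalVariation

open Measure

variable {α : Type*} {mα : MeasurableSpace α}

lemma tvDist_eq_toReal_sub_apply_univ_add (μ ν : Measure α) [IsFiniteMeasure μ]
    [IsFiniteMeasure ν] :
    tvDist μ ν = ((μ - ν) Set.univ + (ν - μ) Set.univ).toReal / 2 := by
  have hμ : μ ≪ μ + ν := absolutelyContinuous_of_le (Measure.le_add_right le_rfl)
  have hν : ν ≪ μ + ν := absolutelyContinuous_of_le (Measure.le_add_left le_rfl)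
  have hint : ∫ x, |(μ.rnDeriv (μ + ν) x).toReal - (ν.rnDeriv (μ + ν) x).toReal| ∂(μ + ν)
      = (∫⁻ x, (μ.rnDeriv (μ + ν) x - ν.rnDeriv (μ + ν) x)
          + (ν.rnDeriv (μ + ν) x - μ.rnDeriv (μ + ν) x) ∂(μ + ν)).toReal := by
    rw [← integral_toReal (by fun_prop)]
    · refine integral_congr_ae ?_
      filter_upwards [rnDeriv_ne_top μ (μ + ν), rnDeriv_ne_top ν (μ + ν)] with x hxμ hxν
      exact ENNReal.abs_toReal_sub_toReal hxμ hxν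
    · filter_upwards [rnDeriv_lt_top μ (μ + ν), rnDeriv_lt_top ν (μ + ν)] with x hxμ hxν
      exact ENNReal.add_lt_top.mpr ⟨tsub_le_self.trans_lt hxμ, tsub_le_self.trans_lt hxν⟩
  rw [tvDist, hint, lintegral_add_left (by fun_prop),
    ← sub_apply_univ_eq_lintegral_rnDeriv_tsub hμ hν,
    ← sub_apply_univ_eq_lintegral_rnDeriv_tsub hν hμ]
  ring

lemma tvDist_eq_toReal_sub_apply_univ {μ ν : Measure α} [IsFiniteMeasure μ] [IsFiniteMeasure ν]
    (h : μ Set.univ = ν Set.univ) : tvDist μ ν = ((μ - ν) Set.univ).toReal := by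
  rw [tvDist_eq_toReal_sub_apply_univ_add, ← sub_apply_univ_comm h, ← two_mul,
    ENNReal.toReal_mul, ENNReal.toReal_ofNat]
  ring

end TotalVariation

section MetropolisHastings

open Measure

variable {E : Type*} [MeasurableSpace E]

lemma lintegral_mhAccept_lt_top (π : Measure E) [IsFiniteMeasure π] (P : Kernel E E)
    [IsFiniteKernel P] : ∫⁻ p, mhAccept π P p ∂(π ⊗ₘ P) < ∞ :=
  (lintegral_mono fun _ => min_le_left _ _).trans_lt (by simp)

lemma lintegral_mhAccept_le (π πt : Measure E) [IsFiniteMeasure π] [IsFiniteMeasure πt]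
    (P : Kernel E E) [IsMarkovKernel P]
    (hac : ((π ⊗ₘ P).map Prod.swap) ≪ (π ⊗ₘ P))
    (hact : ((πt ⊗ₘ P).map Prod.swap) ≪ (πt ⊗ₘ P)) :
    ∫⁻ p, mhAccept π P p ∂(π ⊗ₘ P)
      ≤ ∫⁻ p, mhAccept πt P p ∂(πt ⊗ₘ P) + 2 * (π - πt) Set.univ := by
  have hswap : ((π ⊗ₘ P).map Prod.swap - (πt ⊗ₘ P).map Prod.swap) Set.univ
      = (π ⊗ₘ P - πt ⊗ₘ P) Set.univ := by
    have h : (π ⊗ₘ P - πt ⊗ₘ P).map Prod.swap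
        = (π ⊗ₘ P).map Prod.swap - (πt ⊗ₘ P).map Prod.swap :=
      Measure.map_sub MeasurableEquiv.prodComm (π ⊗ₘ P) (πt ⊗ₘ P)
    rw [← h, map_apply measurable_swap MeasurableSet.univ, Set.preimage_univ]
  have hoverlap := lintegral_min_one_rnDeriv_le hac hact
  rwa [hswap, compProd_sub_apply_univ, add_assoc, ← two_mul] at hoverlap

end MetropolisHastings

/-- If `K` and `K̃` are the Metropolis–Hastings kernels targeting `π` resp.
`π̃` with the same proposal kernel `P` (both acceptance probabilities being well-defined), then
the average acceptance rates satisfy `|ᾱ(K) − ᾱ(K̃)| ≤ 2 d_TV(π, π̃)`. -/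
theorem avg_acceptance_stability
    {d : ℕ} (π πt : Measure (Fin d → ℝ)) [IsProbabilityMeasure π] [IsProbabilityMeasure πt]
    (P : Kernel (Fin d → ℝ) (Fin d → ℝ)) [IsMarkovKernel P]
    (hac : ((π ⊗ₘ P).map Prod.swap) ≪ (π ⊗ₘ P))
    (hact : ((πt ⊗ₘ P).map Prod.swap) ≪ (πt ⊗ₘ P)) :
    |(∫⁻ p, mhAccept π P p ∂(π ⊗ₘ P)).toReal
        - (∫⁻ p, mhAccept πt P p ∂(πt ⊗ₘ P)).toReal|
      ≤ 2 * tvDist π πt := by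
  have hmass : π Set.univ = πt Set.univ := by simp
  have hD : (π - πt) Set.univ ≠ ∞ := ne_top_of_le_ne_top (measure_ne_top π _) (Measure.sub_le _)
  have h₁ := lintegral_mhAccept_le π πt P hac hact
  have h₂ := lintegral_mhAccept_le πt π P hact hac
  rw [← Measure.sub_apply_univ_comm hmass] at h₂
  rw [tvDist_eq_toReal_sub_apply_univ hmass, ← ENNReal.toReal_ofNat 2, ← ENNReal.toReal_mul]
  exact ENNReal.abs_toReal_sub_le (lintegral_mhAccept_lt_top π P).ne
    (lintegral_mhAccept_lt_top πt P).ne (ENNReal.mul_ne_top (by simp) hD) h₁ h₂
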